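/- arXiv:2505.16357 — 2 statements merged into one kernel-verified Lean document; each statement's English description precedes it below -/
import Mathlib

section
/- Let M be an MDP with state set S, let s ∈ S, let T₁,…,T_k ⊆ S be target sets with rational coefficients q₁,…,q_k, and set 𝒯 = {T₁,…,T_k}. Let M_𝒯 be the goal unfolding of M w.r.t. 𝒯 with reward function rew built from the weights q_T = Σ_{j : T_j = T} q_j for T ∈ 𝒯. Then for opt ∈ {min, max}: opt over σ ∈ HR schedulers of M of Σ_{j=1}^k q_j · Pr^{M,σ}_s(◇T_j) equals opt over σ ∈ HR schedulers of M_𝒯 of E^σ_{(s,∅)}(rew). -/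
open scoped BigOperators Classical
open Filter

/-- A finite history: an initial state together with a list of (action, next-state) steps. -/
abbrev Hist (S A : Type*) : Type _ := S × List (A × S)

/-- The last state of a history. -/
def Hist.last {S A : Type*} (π : Hist S A) : S :=
  (π.2.getLast?).elim π.1 Prod.snd

/-- A Markov decision process with finite state space `S` and finite action space `A`:
`P s a s'` is the transition probability, each state has at least one enabled action
(an action whose outgoing probabilities sum to `1`), and the outgoing probabilities
of a non-enabled action sum to `0`. -/
structure MDP (S A : Type*) [Fintype S] [Fintype A] where
  P : S → A → S → ℝ
  nonneg : ∀ s a s', 0 ≤ P s a s'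
  le_one : ∀ s a s', P s a s' ≤ 1
  sum_cases : ∀ s a, (∑ s', P s a s') = 1 ∨ (∑ s', P s a s') = 0
  exists_enabled : ∀ s, ∃ a, (∑ s', P s a s') = 1

namespace MDP

variable {S A : Type*} [Fintype S] [Fintype A]

/-- Action `a` is enabled in state `s`. -/
def enabled (M : MDP S A) (s : S) (a : A) : Prop := (∑ s', M.P s a s') = 1

/-- A state is absorbing if every enabled action loops on it with probability 1. -/
def Absorbing (M : MDP S A) (s : S) : Prop := ∀ a, M.enabled s a → M.P s a s = 1

end MDP

/-- A (history-dependent, randomized) scheduler for `M`: it assigns to every finite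
history a probability distribution over the actions enabled at its last state. -/
structure Scheduler {S A : Type*} [Fintype S] [Fintype A] (M : MDP S A) where
  choice : Hist S A → A → ℝ
  nonneg : ∀ π a, 0 ≤ choice π a
  sum_one : ∀ π, (∑ a, choice π a) = 1
  supp : ∀ π a, ¬ M.enabled (Hist.last π) a → choice π a = 0

namespace Scheduler

variable {S A : Type*} [Fintype S] [Fintype A] {M : MDP S A}

/-- A scheduler is memoryless if its choice only depends on the last state of the history. -/
def Memoryless (σ : Scheduler M) : Prop :=
  ∀ π π' : Hist S A, Hist.last π = Hist.last π' → σ.choice π = σ.choice π'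

/-- A scheduler is deterministic if all its choice probabilities are 0 or 1. -/
def Deterministic (σ : Scheduler M) : Prop :=
  ∀ π a, σ.choice π a = 0 ∨ σ.choice π a = 1

/-- Memoryless deterministic (MD) schedulers. -/
def MD (σ : Scheduler M) : Prop := σ.Memoryless ∧ σ.Deterministic

end Scheduler

/-- Probability of reaching the target set `T` within `n` steps, starting from history `π`,
under scheduler `σ`. -/
noncomputable def reachN {S A : Type*} [Fintype S] [Fintype A] (M : MDP S A)
    (σ : Scheduler M) (T : Set S) : ℕ → Hist S A → ℝ
  | 0, π => if Hist.last π ∈ T then 1 else 0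
  | n + 1, π =>
      if Hist.last π ∈ T then 1
      else ∑ a, σ.choice π a * ∑ s', M.P (Hist.last π) a s' *
        reachN M σ T n (π.1, π.2 ++ [(a, s')])

/-- `Pr M σ s T` is the probability of eventually reaching `T` from state `s` under
scheduler `σ`: the supremum of the step-bounded reachability probabilities. -/
noncomputable def Pr {S A : Type*} [Fintype S] [Fintype A] (M : MDP S A)
    (σ : Scheduler M) (s : S) (T : Set S) : ℝ :=
  ⨆ n : ℕ, reachN M σ T n (s, [])

/-- Transition probabilities of the goal unfolding of `M` with respect to the (indexed)
family of target sets `T : ι → Set S`: states are pairs `(s, 𝒰)` where `𝒰` records the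
indices of the target sets already visited. -/
noncomputable def unfoldP {S A ι : Type*} [Fintype S] [Fintype A] [Fintype ι]
    (M : MDP S A) (T : ι → Set S) :
    (S × Finset ι) → A → (S × Finset ι) → ℝ := fun x a y =>
  if y.2 = x.2 ∪ Finset.univ.filter (fun i => x.1 ∈ T i) then M.P x.1 a y.1 else 0

/-- The reward function of the goal unfolding built from the weights `q`: in state `(s, 𝒰)`
one collects the weight of every target set that contains `s` and has not been visited yet. -/
noncomputable def unfoldRew {S ι : Type*} [Fintype S] [Fintype ι]
    (T : ι → Set S) (q : ι → ℚ) : (S × Finset ι) → ℝ := fun x =>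
  ∑ i ∈ Finset.univ.filter (fun i => x.1 ∈ T i ∧ i ∉ x.2), (q i : ℝ)

/-- Expected cumulative reward over the first `n` steps (including the current state),
starting from history `π`, under scheduler `σ`. -/
noncomputable def rewN {S A : Type*} [Fintype S] [Fintype A] (M : MDP S A)
    (σ : Scheduler M) (r : S → ℝ) : ℕ → Hist S A → ℝ
  | 0, π => r (Hist.last π)
  | n + 1, π =>
      r (Hist.last π) + ∑ a, σ.choice π a * ∑ s', M.P (Hist.last π) a s' *
        rewN M σ r n (π.1, π.2 ++ [(a, s')])

/-- `ExpRew M σ r s` is the expected total reward of `r` from state `s` under scheduler `σ`: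
the limit of the expected `n`-step cumulative rewards. -/
noncomputable def ExpRew {S A : Type*} [Fintype S] [Fintype A] (M : MDP S A)
    (σ : Scheduler M) (r : S → ℝ) (s : S) : ℝ :=
  limUnder atTop (fun n => rewN M σ r n (s, []))

/-! The second component of a state of the goal unfolding evolves deterministically, so the
histories of `M` correspond to the histories of the unfolding started with empty bookkeeping
(`liftHist`, `projHist`), and schedulers transfer in both directions along this correspondence.
Along a lifted history the weight of `T j` is collected exactly at the first visit of `T j`;
hence, by linearity in the reward, the `n`-step expected reward is `∑ j, q j` times the
probability of reaching `T j` within `n` steps, and letting `n → ∞` shows that both sides range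
over the same set of values. -/

namespace Hist

variable {S A : Type*}

@[simp] lemma last_concat (x : S) (l : List (A × S)) (a : A) (s' : S) :
    Hist.last (x, l ++ [(a, s')]) = s' := by
  simp [Hist.last]

lemma last_cons (x : S) (a : A) (y : S) (l : List (A × S)) :
    Hist.last (x, (a, y) :: l) = Hist.last (y, l) := by
  rcases l.eq_nil_or_concat with rfl | ⟨l, ⟨b, z⟩, rfl⟩
  · rfl
  · rw [List.concat_eq_append, ← List.cons_append, last_concat, last_concat]

end Hist

section StepExp

variable {S A : Type*} [Fintype S] [Fintype A] {M : MDP S A}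

noncomputable def stepExp (σ : Scheduler M) (π : Hist S A) (f : A → S → ℝ) : ℝ :=
  ∑ a, σ.choice π a * ∑ s', M.P (Hist.last π) a s' * f a s'

lemma reachN_succ (σ : Scheduler M) (T : Set S) (n : ℕ) (π : Hist S A) :
    reachN M σ T (n + 1) π = if Hist.last π ∈ T then 1
      else stepExp σ π fun a s' => reachN M σ T n (π.1, π.2 ++ [(a, s')]) :=
  rfl

lemma rewN_succ (σ : Scheduler M) (r : S → ℝ) (n : ℕ) (π : Hist S A) :
    rewN M σ r (n + 1) π = r (Hist.last π) +
      stepExp σ π fun a s' => rewN M σ r n (π.1, π.2 ++ [(a, s')]) :=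
  rfl

lemma stepExp_nonneg (σ : Scheduler M) (π : Hist S A) {f : A → S → ℝ}
    (hf : ∀ a s', 0 ≤ f a s') : 0 ≤ stepExp σ π f :=
  Finset.sum_nonneg fun a _ => mul_nonneg (σ.nonneg _ _) <|
    Finset.sum_nonneg fun s' _ => mul_nonneg (M.nonneg _ _ _) (hf a s')

lemma stepExp_mono (σ : Scheduler M) (π : Hist S A) {f g : A → S → ℝ}
    (hfg : ∀ a s', f a s' ≤ g a s') : stepExp σ π f ≤ stepExp σ π g :=
  Finset.sum_le_sum fun a _ => mul_le_mul_of_nonneg_left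
    (Finset.sum_le_sum fun s' _ => mul_le_mul_of_nonneg_left (hfg a s') (M.nonneg _ _ _))
    (σ.nonneg _ _)

lemma stepExp_le_one (σ : Scheduler M) (π : Hist S A) {f : A → S → ℝ}
    (hf : ∀ a s', f a s' ≤ 1) : stepExp σ π f ≤ 1 := by
  have hP : ∀ a, ∑ s', M.P (Hist.last π) a s' ≤ 1 := fun a => by
    rcases M.sum_cases (Hist.last π) a with h | h <;> norm_num [h]
  calc stepExp σ π f ≤ stepExp σ π fun _ _ => 1 := stepExp_mono σ π hf
    _ ≤ ∑ a, σ.choice π a * 1 := by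
      refine Finset.sum_le_sum fun a _ => mul_le_mul_of_nonneg_left ?_ (σ.nonneg _ _)
      simpa using hP a
    _ = 1 := by simp [σ.sum_one]

@[simp] lemma stepExp_zero (σ : Scheduler M) (π : Hist S A) :
    stepExp σ π (fun _ _ => 0) = 0 := by
  simp [stepExp]

lemma stepExp_sum_mul {ι : Type*} [Fintype ι] (σ : Scheduler M) (π : Hist S A) (c : ι → ℝ)
    (f : ι → A → S → ℝ) :
    stepExp σ π (fun a s' => ∑ j, c j * f j a s') = ∑ j, c j * stepExp σ π (f j) := by
  simp only [stepExp, Finset.mul_sum]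
  rw [Finset.sum_comm_cycle]
  exact Finset.sum_congr rfl fun _ _ => Finset.sum_congr rfl fun _ _ =>
    Finset.sum_congr rfl fun _ _ => by ring

end StepExp

section Reach

variable {S A : Type*} [Fintype S] [Fintype A] (M : MDP S A) (σ : Scheduler M) (T : Set S)

lemma reachN_nonneg (n : ℕ) (π : Hist S A) : 0 ≤ reachN M σ T n π := by
  induction n generalizing π with
  | zero => unfold reachN; split <;> norm_num
  | succ n ih =>
      rw [reachN_succ]; split
      · norm_num
      · exact stepExp_nonneg σ π fun _ _ => ih _

lemma reachN_le_one (n : ℕ) (π : Hist S A) : reachN M σ T n π ≤ 1 := by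
  induction n generalizing π with
  | zero => unfold reachN; split <;> norm_num
  | succ n ih =>
      rw [reachN_succ]; split
      · rfl
      · exact stepExp_le_one σ π fun _ _ => ih _

lemma reachN_le_succ (n : ℕ) (π : Hist S A) :
    reachN M σ T n π ≤ reachN M σ T (n + 1) π := by
  induction n generalizing π with
  | zero =>
      rw [reachN_succ]; unfold reachN; split
      · rfl
      · exact stepExp_nonneg σ π fun _ _ => reachN_nonneg M σ T 0 _
  | succ n ih =>
      rw [reachN_succ, reachN_succ (n := n + 1)]; split
      · rfl
      · exact stepExp_mono σ π fun _ _ => ih _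

lemma tendsto_reachN_Pr (s : S) :
    Tendsto (fun n => reachN M σ T n (s, [])) atTop (nhds (Pr M σ s T)) :=
  tendsto_atTop_ciSup (monotone_nat_of_le_succ fun n => reachN_le_succ M σ T n _)
    ⟨1, by rintro _ ⟨n, rfl⟩; exact reachN_le_one M σ T n _⟩

end Reach

lemma rewN_sum_mul {S A ι : Type*} [Fintype S] [Fintype A] [Fintype ι] {M : MDP S A}
    (σ : Scheduler M) (c : ι → ℝ) (r : ι → S → ℝ) (n : ℕ) (π : Hist S A) :
    rewN M σ (fun x => ∑ j, c j * r j x) n π = ∑ j, c j * rewN M σ (r j) n π := by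
  induction n generalizing π with
  | zero => rfl
  | succ n ih =>
      simp only [rewN_succ, ih, stepExp_sum_mul, mul_add, Finset.sum_add_distrib]

section GoalUnfolding

variable {S A ι : Type*}

def projHist (π : Hist (S × Finset ι) A) : Hist S A :=
  (π.1.1, π.2.map fun p => (p.1, p.2.1))

lemma last_projHist (π : Hist (S × Finset ι) A) :
    Hist.last (projHist π) = (Hist.last π).1 := by
  obtain ⟨x, l⟩ := π
  rcases l.eq_nil_or_concat with rfl | ⟨l, ⟨a, y⟩, rfl⟩
  · rfl
  · simp [projHist]

variable [Fintype ι] {T : ι → Set S}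

noncomputable def unfoldSucc (T : ι → Set S) (x : S × Finset ι) (s' : S) : S × Finset ι :=
  (s', x.2 ∪ Finset.univ.filter fun i => x.1 ∈ T i)

noncomputable def liftSteps (T : ι → Set S) :
    S × Finset ι → List (A × S) → List (A × (S × Finset ι))
  | _, [] => []
  | x, (a, s') :: l => (a, unfoldSucc T x s') :: liftSteps T (unfoldSucc T x s') l

lemma liftSteps_concat (x : S × Finset ι) (l : List (A × S)) (a : A) (s' : S) :
    liftSteps T x (l ++ [(a, s')]) =
      liftSteps T x l ++ [(a, unfoldSucc T (Hist.last (x, liftSteps T x l)) s')] := by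
  induction l generalizing x with
  | nil => rfl
  | cons p l ih =>
      obtain ⟨b, u⟩ := p
      simp only [List.cons_append, liftSteps, ih, Hist.last_cons]

noncomputable def liftHist (T : ι → Set S) (π : Hist S A) : Hist (S × Finset ι) A :=
  ((π.1, ∅), liftSteps T (π.1, ∅) π.2)

lemma liftHist_concat (π : Hist S A) (a : A) (s' : S) :
    liftHist T (π.1, π.2 ++ [(a, s')]) =
      ((liftHist T π).1,
        (liftHist T π).2 ++ [(a, unfoldSucc T (Hist.last (liftHist T π)) s')]) := by
  simp only [liftHist, liftSteps_concat]

lemma fst_last_liftHist (π : Hist S A) : (Hist.last (liftHist T π)).1 = Hist.last π := by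
  obtain ⟨x, l⟩ := π
  induction l using List.reverseRecOn with
  | nil => rfl
  | append_singleton l p ih =>
      obtain ⟨a, s'⟩ := p
      rw [liftHist_concat (π := (x, l)), Hist.last_concat, Hist.last_concat]
      rfl

lemma projHist_liftHist (π : Hist S A) : projHist (liftHist T π) = π := by
  obtain ⟨s, l⟩ := π
  suffices ∀ x, (liftSteps T x l).map (fun p => (p.1, p.2.1)) = l by
    simp [projHist, liftHist, this]
  induction l with
  | nil => intro; rfl
  | cons p l ih =>
      obtain ⟨a, s'⟩ := p
      intro x
      simp [liftSteps, ih, unfoldSucc]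

variable [Fintype S] [Fintype A]

lemma sum_unfoldP_mul (M : MDP S A) (T : ι → Set S) (x : S × Finset ι) (a : A)
    (g : S × Finset ι → ℝ) :
    ∑ y, unfoldP M T x a y * g y = ∑ s', M.P x.1 a s' * g (unfoldSucc T x s') := by
  rw [Fintype.sum_prod_type]
  refine Finset.sum_congr rfl fun s' _ => ?_
  simp [unfoldP, unfoldSucc, ite_mul]

variable {M : MDP S A} {Mu : MDP (S × Finset ι) A}

lemma enabled_iff_of_unfold (hMu : Mu.P = unfoldP M T) (x : S × Finset ι) (a : A) :
    Mu.enabled x a ↔ M.enabled x.1 a := by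
  simpa [MDP.enabled, hMu] using iff_of_eq (congrArg (· = (1 : ℝ))
    (sum_unfoldP_mul M T x a fun _ => 1))

noncomputable def Scheduler.toUnfold (σ : Scheduler M) (hMu : Mu.P = unfoldP M T) :
    Scheduler Mu where
  choice π := σ.choice (projHist π)
  nonneg _ := σ.nonneg _
  sum_one _ := σ.sum_one _
  supp π a h := σ.supp _ a fun hM =>
    h ((enabled_iff_of_unfold hMu _ a).2 (last_projHist π ▸ hM))

noncomputable def Scheduler.ofUnfold (σ' : Scheduler Mu) (hMu : Mu.P = unfoldP M T) :
    Scheduler M where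
  choice π := σ'.choice (liftHist T π)
  nonneg _ := σ'.nonneg _
  sum_one _ := σ'.sum_one _
  supp π a h := σ'.supp _ a fun hMu' =>
    h (fst_last_liftHist (T := T) π ▸ (enabled_iff_of_unfold hMu _ a).1 hMu')

lemma Scheduler.toUnfold_choice_liftHist (σ : Scheduler M) (hMu : Mu.P = unfoldP M T)
    (π : Hist S A) : (σ.toUnfold hMu).choice (liftHist T π) = σ.choice π := by
  simp only [Scheduler.toUnfold, projHist_liftHist]

variable {σ : Scheduler M} {σ' : Scheduler Mu}

lemma stepExp_liftHist (hMu : Mu.P = unfoldP M T)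
    (hσ : ∀ π, σ'.choice (liftHist T π) = σ.choice π) (π : Hist S A)
    (F : Hist (S × Finset ι) A → ℝ) :
    stepExp σ' (liftHist T π) (fun a y => F ((liftHist T π).1, (liftHist T π).2 ++ [(a, y)])) =
      stepExp σ π fun a s' => F (liftHist T (π.1, π.2 ++ [(a, s')])) := by
  simp only [stepExp, hσ, hMu, sum_unfoldP_mul, fst_last_liftHist, liftHist_concat]

noncomputable def firstVisitRew (T : ι → Set S) (j : ι) (x : S × Finset ι) : ℝ :=
  if x.1 ∈ T j ∧ j ∉ x.2 then 1 else 0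

lemma rewN_firstVisitRew_liftHist (hMu : Mu.P = unfoldP M T)
    (hσ : ∀ π, σ'.choice (liftHist T π) = σ.choice π) (j : ι) (n : ℕ) (π : Hist S A) :
    rewN Mu σ' (firstVisitRew T j) n (liftHist T π) =
      if j ∈ (Hist.last (liftHist T π)).2 then 0 else reachN M σ (T j) n π := by
  induction n generalizing π with
  | zero =>
      have hx := fst_last_liftHist (T := T) π
      show firstVisitRew T j _ = _
      unfold reachN
      by_cases hjU : j ∈ (Hist.last (liftHist T π)).2 <;>
        by_cases hjT : Hist.last π ∈ T j <;> simp [firstVisitRew, hx, hjU, hjT]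
  | succ n ih =>
      have hx := fst_last_liftHist (T := T) π
      rw [rewN_succ, stepExp_liftHist hMu hσ, reachN_succ]
      simp only [ih]
      simp only [liftHist_concat, Hist.last_concat]
      by_cases hjU : j ∈ (Hist.last (liftHist T π)).2 <;>
        by_cases hjT : Hist.last π ∈ T j <;> simp [firstVisitRew, unfoldSucc, hx, hjU, hjT]

lemma unfoldRew_eq_sum_firstVisitRew (T : ι → Set S) (q : ι → ℚ) :
    unfoldRew T q = fun x => ∑ j, (q j : ℝ) * firstVisitRew T j x := by
  funext x
  simp [unfoldRew, firstVisitRew, Finset.sum_filter]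

lemma expRew_unfoldRew (hMu : Mu.P = unfoldP M T)
    (hσ : ∀ π, σ'.choice (liftHist T π) = σ.choice π) (q : ι → ℚ) (s : S) :
    ExpRew Mu σ' (unfoldRew T q) (s, ∅) = ∑ j, (q j : ℝ) * Pr M σ s (T j) := by
  have hrewN : ∀ n, rewN Mu σ' (unfoldRew T q) n ((s, ∅), []) =
      ∑ j, (q j : ℝ) * reachN M σ (T j) n (s, []) := fun n => by
    rw [unfoldRew_eq_sum_firstVisitRew, rewN_sum_mul]
    refine Finset.sum_congr rfl fun j _ => ?_
    rw [show ((s, ∅), []) = liftHist (A := A) T (s, []) from rfl,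
      rewN_firstVisitRew_liftHist hMu hσ]
    rfl
  refine Tendsto.limUnder_eq ?_
  simp only [hrewN]
  exact tendsto_finsetSum _ fun j _ => (tendsto_reachN_Pr M σ (T j) s).const_mul _

end GoalUnfolding

lemma setOf_weighted_Pr_eq_setOf_expRew_unfold {S A ι : Type*} [Fintype S] [Fintype A]
    [Fintype ι] (M : MDP S A) (s : S) (T : ι → Set S) (q : ι → ℚ)
    (Mu : MDP (S × Finset ι) A) (hMu : Mu.P = unfoldP M T) :
    {x : ℝ | ∃ σ : Scheduler M, x = ∑ j, (q j : ℝ) * Pr M σ s (T j)} =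
      {x : ℝ | ∃ σ : Scheduler Mu, x = ExpRew Mu σ (unfoldRew T q) (s, ∅)} := by
  ext x
  constructor
  · rintro ⟨σ, rfl⟩
    exact ⟨σ.toUnfold hMu,
      (expRew_unfoldRew hMu (σ.toUnfold_choice_liftHist hMu) q s).symm⟩
  · rintro ⟨σ', rfl⟩
    exact ⟨σ'.ofUnfold hMu, expRew_unfoldRew hMu (fun _ => rfl) q s⟩

theorem weighted_reach_eq_expected_reward_in_unfolding_general
    {S A : Type*} [Fintype S] [Fintype A]
    {k : ℕ}
    (M : MDP S A) (s : S) (T : Fin k → Set S) (q : Fin k → ℚ)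
    (Mu : MDP (S × Finset (Fin k)) A) (hMu : Mu.P = unfoldP M T) :
    sSup {x : ℝ | ∃ σ : Scheduler M, x = ∑ j, (q j : ℝ) * Pr M σ s (T j)} =
      sSup {x : ℝ | ∃ σ : Scheduler Mu, x = ExpRew Mu σ (unfoldRew T q) (s, ∅)} ∧
    sInf {x : ℝ | ∃ σ : Scheduler M, x = ∑ j, (q j : ℝ) * Pr M σ s (T j)} =
      sInf {x : ℝ | ∃ σ : Scheduler Mu, x = ExpRew Mu σ (unfoldRew T q) (s, ∅)} := by
  rw [setOf_weighted_Pr_eq_setOf_expRew_unfold M s T q Mu hMu]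
  exact ⟨rfl, rfl⟩

/-- The optimal (min or max, over all HR schedulers) weighted sum of
reachability probabilities `Σ_j q_j · Pr^σ_s(◇T_j)` in `M` equals the optimal expected
total reward of the associated reward function in the goal unfolding of `M`, started
in `(s, ∅)`.  (Here `Mu` is the goal unfolding, fixed by the hypothesis `hMu`.) -/
theorem weighted_reach_eq_expected_reward_in_unfolding
    {S A : Type*} [Fintype S] [Fintype A] [Nonempty S] [Nonempty A]
    {k : ℕ} (hk : 1 ≤ k)
    (M : MDP S A) (s : S) (T : Fin k → Set S) (q : Fin k → ℚ)
    (Mu : MDP (S × Finset (Fin k)) A) (hMu : Mu.P = unfoldP M T) :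
    sSup {x : ℝ | ∃ σ : Scheduler M, x = ∑ j, (q j : ℝ) * Pr M σ s (T j)} =
      sSup {x : ℝ | ∃ σ : Scheduler Mu, x = ExpRew Mu σ (unfoldRew T q) (s, ∅)} ∧
    sInf {x : ℝ | ∃ σ : Scheduler M, x = ∑ j, (q j : ℝ) * Pr M σ s (T j)} =
      sInf {x : ℝ | ∃ σ : Scheduler Mu, x = ExpRew Mu σ (unfoldRew T q) (s, ∅)} :=
  weighted_reach_eq_expected_reward_in_unfolding_general M s T q Mu hMu
end

section
/- With the data of a relational reachability instance (MDP M, m ≥ n ≥ 1, rational q₁,…,q_m, states s₁,…,s_m, surjective index map k, target sets T₁,…,T_m), let v^max = Σ_{c=(s,·)∈Comb} max_{σ∈HR} Σ_{i∈ind(c)} qᵢ · Pr^σ_s(◇Tᵢ). Then for every rational q: (i) there exist schedulers σ₁,…,σₙ ∈ HR with Σ_{i=1}^m qᵢ · Pr^{σ_{k(i)}}_{sᵢ}(◇Tᵢ) ≥ q if and only if v^max ≥ q; and (ii) there exist σ₁,…,σₙ ∈ HR with Σ_{i=1}^m qᵢ · Pr^{σ_{k(i)}}_{sᵢ}(◇Tᵢ)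 > q if and only if v^max > q. -/
open scoped BigOperators Classical
open Filter

/-- The set `Comb` of state-scheduler combinations `(sᵢ, k(i))` of a relational
reachability instance. -/
noncomputable def combSet {S : Type*} [Fintype S] {m n : ℕ}
    (s : Fin m → S) (k : Fin m → Fin n) : Finset (S × Fin n) :=
  Finset.image (fun i => (s i, k i)) Finset.univ

/-- The contribution `Σ_{i ∈ ind(c)} qᵢ · Pr^σ_{c.1}(◇Tᵢ)` of a state-scheduler
combination `c` under a scheduler `σ`. -/
noncomputable def combVal {S A : Type*} [Fintype S] [Fintype A] {m n : ℕ}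
    (M : MDP S A) (q : Fin m → ℚ) (s : Fin m → S) (k : Fin m → Fin n)
    (T : Fin m → Set S) (σ : Scheduler M) (c : S × Fin n) : ℝ :=
  ∑ i ∈ Finset.univ.filter (fun i => (s i, k i) = c), (q i : ℝ) * Pr M σ c.1 (T i)

/-- `v^min`: the sum over all combinations `c` of the infimum over all schedulers of the
contribution of `c`. -/
noncomputable def vMin {S A : Type*} [Fintype S] [Fintype A] {m n : ℕ}
    (M : MDP S A) (q : Fin m → ℚ) (s : Fin m → S) (k : Fin m → Fin n)
    (T : Fin m → Set S) : ℝ :=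
  ∑ c ∈ combSet s k, sInf {x : ℝ | ∃ σ : Scheduler M, x = combVal M q s k T σ c}

/-- `v^max`: the sum over all combinations `c` of the supremum over all schedulers of the
contribution of `c`. -/
noncomputable def vMax {S A : Type*} [Fintype S] [Fintype A] {m n : ℕ}
    (M : MDP S A) (q : Fin m → ℚ) (s : Fin m → S) (k : Fin m → Fin n)
    (T : Fin m → Set S) : ℝ :=
  ∑ c ∈ combSet s k, sSup {x : ℝ | ∃ σ : Scheduler M, x = combVal M q s k T σ c}

/-- The achievable value set
`A = {Σ_{i} qᵢ · Pr^{σ_{k(i)}}_{sᵢ}(◇Tᵢ) : σ₁,…,σₙ ∈ HR}`. -/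
noncomputable def achSet {S A : Type*} [Fintype S] [Fintype A] {m n : ℕ}
    (M : MDP S A) (q : Fin m → ℚ) (s : Fin m → S) (k : Fin m → Fin n)
    (T : Fin m → Set S) : Set ℝ :=
  {x : ℝ | ∃ σ : Fin n → Scheduler M,
    x = ∑ i, (q i : ℝ) * Pr M (σ (k i)) (s i) (T i)}

/-! The value `v^max` splits into one maximisation problem per state-scheduler combination,
because optimal schedulers for different combinations can be glued by dispatching on the
initial state. So everything reduces to the attainment of `sup_σ Σ qᵢ Pr^σ_s(◇Tᵢ)`.

Remembering the set of targets visited so far turns this into a total-payoff problem on the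
finite product `S × Finset ι`, with payoff `Σ_{i ∈ B'} qᵢ - Σ_{i ∈ B} qᵢ` when the memory grows
from `B` to `B'`. For a discount factor `γ < 1` the Bellman operator of the discounted problem
is a contraction, and the greedy policy for its fixed point beats every history-dependent
randomized scheduler. There are finitely many such policies, so one of them is optimal for
discount factors arbitrarily close to `1`, and Abel's limit theorem carries its optimality over
to the undiscounted payoff, which telescopes to `Σ qᵢ Pr^σ_s(◇Tᵢ)` minus a constant. -/

open Finset Topology

section Histories

variable {S A ι : Type*} [Fintype ι]

namespace Hist

def snoc (π : Hist S A) (a : A) (s' : S) : Hist S A := (π.1, π.2 ++ [(a, s')])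

@[simp] lemma last_snoc (π : Hist S A) (a : A) (s' : S) : (π.snoc a s').last = s' := by
  simp [snoc, Hist.last]

def Visits (T : Set S) (π : Hist S A) : Prop := π.1 ∈ T ∨ ∃ p ∈ π.2, p.2 ∈ T

lemma visits_of_last_mem {T : Set S} {π : Hist S A} (h : π.last ∈ T) : π.Visits T := by
  unfold Hist.last at h
  rcases hl : π.2.getLast? with _ | p
  · rw [hl] at h; exact Or.inl h
  · rw [hl] at h; exact Or.inr ⟨p, List.mem_of_getLast? hl, h⟩

@[simp] lemma visits_snoc {T : Set S} {π : Hist S A} {a : A} {s' : S} :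
    (π.snoc a s').Visits T ↔ π.Visits T ∨ s' ∈ T := by
  simp only [Visits, snoc, List.mem_append, List.mem_singleton]
  grind

@[simp] lemma visits_nil {T : Set S} {s : S} : Hist.Visits T ((s, []) : Hist S A) ↔ s ∈ T := by
  simp [Visits]

noncomputable def visited (T : ι → Set S) (π : Hist S A) : Finset ι :=
  univ.filter fun i => π.Visits (T i)

noncomputable def memory (T : ι → Set S) (π : Hist S A) : S × Finset ι := (π.last, π.visited T)

noncomputable def payoff (q : ι → ℝ) (T : ι → Set S) (π : Hist S A) : ℝ :=
  ∑ i ∈ π.visited T, q i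

end Hist

noncomputable def visitInd (T : Set S) (π : Hist S A) : ℝ := if π.Visits T then 1 else 0

lemma visitInd_mem_Icc (T : Set S) (π : Hist S A) : visitInd T π ∈ Set.Icc 0 1 := by
  unfold visitInd; split <;> norm_num

noncomputable def hitsAt (T : ι → Set S) (x : S) : Finset ι := univ.filter fun i => x ∈ T i

lemma Hist.visited_snoc (T : ι → Set S) (π : Hist S A) (a : A) (s' : S) :
    (π.snoc a s').visited T = π.visited T ∪ hitsAt T s' := by
  ext; simp [Hist.visited, hitsAt]

lemma Hist.payoff_eq_sum (q : ι → ℝ) (T : ι → Set S) :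
    Hist.payoff (A := A) q T = ∑ i, q i • visitInd (T i) := by
  ext π; simp [Hist.payoff, Hist.visited, visitInd, sum_filter]

lemma Hist.abs_payoff_le (q : ι → ℝ) (T : ι → Set S) (π : Hist S A) :
    |π.payoff q T| ≤ ∑ i, |q i| :=
  (abs_sum_le_sum_abs _ _).trans
    (sum_le_sum_of_subset_of_nonneg (subset_univ _) fun i _ _ => abs_nonneg (q i))

end Histories

section Schedulers

variable {S A : Type*} [Fintype S] [Fintype A] {M : MDP S A}

namespace Scheduler

variable (σ : Scheduler M)

lemma sum_choice_mul_le (π : Hist S A) {F : A → ℝ} {c : ℝ}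
    (h : ∀ a, M.enabled π.last a → F a ≤ c) : ∑ a, σ.choice π a * F a ≤ c :=
  calc ∑ a, σ.choice π a * F a ≤ ∑ a, σ.choice π a * c := by
        refine sum_le_sum fun a _ => ?_
        by_cases ha : M.enabled π.last a
        · exact mul_le_mul_of_nonneg_left (h a ha) (σ.nonneg π a)
        · simp [σ.supp π a ha]
    _ = c := by rw [← sum_mul, σ.sum_one, one_mul]

lemma sum_choice_mul_eq (π : Hist S A) {F : A → ℝ} {c : ℝ}
    (h : ∀ a, M.enabled π.last a → F a = c) : ∑ a, σ.choice π a * F a = c :=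
  calc ∑ a, σ.choice π a * F a = ∑ a, σ.choice π a * c := by
        refine sum_congr rfl fun a _ => ?_
        by_cases ha : M.enabled π.last a
        · rw [h a ha]
        · simp [σ.supp π a ha]
    _ = c := by rw [← sum_mul, σ.sum_one, one_mul]

/-- `σ.next φ π` is the expected value of `φ` one step after `π`, so `(σ.next ^ t) φ π` is its
expected value `t` steps after `π`. -/
noncomputable def next : Module.End ℝ (Hist S A → ℝ) where
  toFun φ π := ∑ a, σ.choice π a * ∑ s', M.P π.last a s' * φ (π.snoc a s')
  map_add' φ ψ := by
    ext π; simp only [Pi.add_apply, mul_add, sum_add_distrib]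
  map_smul' c φ := by
    ext π
    simp only [Pi.smul_apply, smul_eq_mul, RingHom.id_apply, mul_sum]
    exact sum_congr rfl fun _ _ => sum_congr rfl fun _ _ => by ring

lemma next_apply (φ : Hist S A → ℝ) (π : Hist S A) :
    σ.next φ π = ∑ a, σ.choice π a * ∑ s', M.P π.last a s' * φ (π.snoc a s') := rfl

lemma next_congr {φ ψ : Hist S A → ℝ} {π : Hist S A}
    (h : ∀ a s', φ (π.snoc a s') = ψ (π.snoc a s')) : σ.next φ π = σ.next ψ π := by
  simp only [next_apply, h]

lemma next_const (c : ℝ) : σ.next (fun _ => c) = fun _ => c := by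
  ext π
  refine σ.sum_choice_mul_eq π fun a ha => ?_
  rw [← sum_mul, ha, one_mul]

lemma next_add_const (φ : Hist S A → ℝ) (c : ℝ) (π : Hist S A) :
    σ.next (fun e => φ e + c) π = σ.next φ π + c := by
  change σ.next (φ + fun _ => c) π = _
  rw [map_add, next_const]
  rfl

lemma next_mono : Monotone σ.next := fun _ _ h π =>
  sum_le_sum fun a _ => mul_le_mul_of_nonneg_left
    (sum_le_sum fun _ _ => mul_le_mul_of_nonneg_left (h _) (M.nonneg _ _ _)) (σ.nonneg π a)

lemma pow_next_mono (t : ℕ) : Monotone ⇑(σ.next ^ t) := by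
  rw [Module.End.coe_pow]; exact σ.next_mono.iterate t

lemma pow_next_const (t : ℕ) (c : ℝ) : (σ.next ^ t) (fun _ => c) = fun _ => c := by
  rw [Module.End.pow_apply]; exact Function.iterate_fixed (σ.next_const c) t

lemma pow_succ_next_apply (t : ℕ) (φ : Hist S A → ℝ) :
    (σ.next ^ (t + 1)) φ = σ.next ((σ.next ^ t) φ) := by
  rw [pow_succ', Module.End.mul_apply]

lemma abs_pow_next_apply_le {φ : Hist S A → ℝ} {c : ℝ} (h : ∀ π, |φ π| ≤ c) (t : ℕ)
    (π : Hist S A) : |(σ.next ^ t) φ π| ≤ c := by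
  have hmono := σ.pow_next_mono t
  rw [abs_le]
  constructor
  · simpa [pow_next_const] using hmono (fun π => (abs_le.1 (h π)).1 : (fun _ => -c) ≤ φ) π
  · simpa [pow_next_const] using hmono (fun π => (abs_le.1 (h π)).2 : φ ≤ fun _ => c) π

noncomputable def ofDet (d : (π : Hist S A) → {a // M.enabled π.last a}) : Scheduler M where
  choice π a := if a = d π then 1 else 0
  nonneg π a := by split <;> norm_num
  sum_one π := by simp
  supp π a h := by rw [if_neg]; rintro rfl; exact h (d π).2

lemma next_ofDet (d : (π : Hist S A) → {a // M.enabled π.last a}) (φ : Hist S A → ℝ)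
    (π : Hist S A) :
    (ofDet d).next φ π = ∑ s', M.P π.last (d π) s' * φ (π.snoc (d π) s') := by
  simp [next_apply, ofDet, ite_mul]

noncomputable def glue (Φ : S → Scheduler M) : Scheduler M where
  choice π := (Φ π.1).choice π
  nonneg π := (Φ π.1).nonneg π
  sum_one π := (Φ π.1).sum_one π
  supp π := (Φ π.1).supp π

lemma reachN_eq_one_of_last_mem {T : Set S} (t : ℕ) {π : Hist S A}
    (h : π.last ∈ T) : reachN M σ T t π = 1 := by
  cases t <;> simp [reachN, h]

section Reachability

variable (T : Set S)

lemma pow_next_visitInd_of_visits (t : ℕ) {π : Hist S A} (h : π.Visits T) :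
    (σ.next ^ t) (visitInd T) π = 1 := by
  induction t generalizing π with
  | zero => simp [visitInd, h]
  | succ t ih =>
    rw [pow_succ_next_apply, σ.next_congr (ψ := fun _ => 1) fun _ _ => ih (by simp [h]),
      next_const]

lemma reachN_eq_pow_next_visitInd (t : ℕ) {π : Hist S A} (h : ¬ π.Visits T) :
    reachN M σ T t π = (σ.next ^ t) (visitInd T) π := by
  have hlast : π.last ∉ T := fun hT => h (Hist.visits_of_last_mem hT)
  induction t generalizing π with
  | zero => simp [reachN, visitInd, h, hlast]
  | succ t ih =>
    rw [reachN, if_neg hlast, pow_succ_next_apply]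
    refine σ.next_congr fun a s' => ?_
    by_cases hs' : s' ∈ T
    · rw [pow_next_visitInd_of_visits _ _ _ (by simp [hs'])]
      exact reachN_eq_one_of_last_mem σ t (by simpa using hs')
    · exact ih (by simp [h, hs']) (by simpa using hs')

lemma reachN_eq_pow_next_visitInd_nil (t : ℕ) (s : S) :
    reachN M σ T t (s, []) = (σ.next ^ t) (visitInd T) (s, []) := by
  by_cases h : s ∈ T
  · rw [pow_next_visitInd_of_visits _ _ _ (by simpa using h)]
    exact reachN_eq_one_of_last_mem σ t h
  · exact σ.reachN_eq_pow_next_visitInd T t (by simpa using h)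

lemma visitInd_le_next : visitInd T ≤ σ.next (visitInd T) := fun π => by
  by_cases h : π.Visits T
  · rw [σ.next_congr (ψ := fun _ => 1) fun _ _ => by simp [visitInd, h], next_const]
    simp [visitInd, h]
  · have := σ.next_mono (fun π => (visitInd_mem_Icc T π).1 : (fun _ => 0) ≤ visitInd T) π
    simpa [next_const, visitInd, h] using this

lemma tendsto_pow_next_visitInd (s : S) :
    Tendsto (fun t => (σ.next ^ t) (visitInd T) (s, [])) atTop (𝓝 (Pr M σ s T)) := by
  have hmono : Monotone fun t => (σ.next ^ t) (visitInd T) (s, []) :=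
    monotone_nat_of_le_succ fun t => by
      rw [pow_succ, Module.End.mul_apply]
      exact σ.pow_next_mono t (σ.visitInd_le_next T) _
  have hle : ∀ t, (σ.next ^ t) (visitInd T) (s, []) ≤ 1 := fun t => by
    simpa [pow_next_const] using
      σ.pow_next_mono t (fun π => (visitInd_mem_Icc T π).2 : visitInd T ≤ fun _ => 1) (s, [])
  simp only [Pr, reachN_eq_pow_next_visitInd_nil]
  exact tendsto_atTop_ciSup hmono ⟨1, Set.forall_mem_range.2 hle⟩

lemma reachN_glue (Φ : S → Scheduler M) (t : ℕ) (π : Hist S A) :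
    reachN M (glue Φ) T t π = reachN M (Φ π.1) T t π := by
  induction t generalizing π with
  | zero => rfl
  | succ t ih => simp only [reachN, ih]; rfl

lemma pr_glue (Φ : S → Scheduler M) (s : S) : Pr M (glue Φ) s T = Pr M (Φ s) s T := by
  simp only [Pr, reachN_glue]

end Reachability

lemma tendsto_pow_next_payoff {ι : Type*} [Fintype ι] (q : ι → ℝ) (T : ι → Set S) (s : S) :
    Tendsto (fun t => (σ.next ^ t) (Hist.payoff q T) (s, [])) atTop
      (𝓝 (∑ i, q i * Pr M σ s (T i))) := by
  simp only [Hist.payoff_eq_sum, map_sum, map_smul, Finset.sum_apply, Pi.smul_apply, smul_eq_mul]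
  exact tendsto_finsetSum _ fun i _ => (σ.tendsto_pow_next_visitInd (T i) s).const_mul (q i)

end Scheduler

end Schedulers

section ProductMDP

variable {S A ι : Type*} [Fintype S] [Fintype A] [Fintype ι] {M : MDP S A}

namespace MDP

variable (M)

/-- Memoryless deterministic policies of the product of `M` with the set of visited targets. -/
abbrev ProductPolicy (ι : Type*) : Type _ := (u : S × Finset ι) → {a // M.enabled u.1 a}

variable (q : ι → ℝ) (T : ι → Set S) (γ : ℝ)

noncomputable def enabledActions (s : S) : Finset A := univ.filter (M.enabled s)

lemma enabledActions_nonempty (s : S) : (M.enabledActions s).Nonempty :=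
  ⟨_, mem_filter.2 ⟨mem_univ _, (M.exists_enabled s).choose_spec⟩⟩

/-- The action value for the discounted total payoff in the product of `M` with the set of
visited targets; `W` is the continuation value. -/
noncomputable def qValue (W : S × Finset ι → ℝ) (u : S × Finset ι) (a : A) : ℝ :=
  ∑ s', M.P u.1 a s' *
    (∑ i ∈ u.2 ∪ hitsAt T s', q i - ∑ i ∈ u.2, q i + γ * W (s', u.2 ∪ hitsAt T s'))

noncomputable def bellman (W : S × Finset ι → ℝ) (u : S × Finset ι) : ℝ :=
  (M.enabledActions u.1).sup' (M.enabledActions_nonempty u.1) (M.qValue q T γ W u)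

variable {γ}

lemma qValue_le_add_dist (hγ : 0 ≤ γ) (W W' : S × Finset ι → ℝ) {u : S × Finset ι} {a : A}
    (ha : M.enabled u.1 a) :
    M.qValue q T γ W u a ≤ M.qValue q T γ W' u a + γ * dist W W' := by
  have hW : ∀ v, W v ≤ W' v + dist W W' := fun v => by
    have := dist_le_pi_dist W W' v
    rw [Real.dist_eq] at this
    linarith [le_abs_self (W v - W' v)]
  calc M.qValue q T γ W u a
      ≤ ∑ s', M.P u.1 a s' * (∑ i ∈ u.2 ∪ hitsAt T s', q i - ∑ i ∈ u.2, q i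
          + γ * W' (s', u.2 ∪ hitsAt T s') + γ * dist W W') :=
        sum_le_sum fun s' _ => mul_le_mul_of_nonneg_left
          (by nlinarith [hW (s', u.2 ∪ hitsAt T s')]) (M.nonneg _ _ _)
    _ = M.qValue q T γ W' u a + (∑ s', M.P u.1 a s') * (γ * dist W W') := by
        simp only [qValue, mul_add, sum_add_distrib, sum_mul]
    _ = M.qValue q T γ W' u a + γ * dist W W' := by
        rw [show ∑ s', M.P u.1 a s' = 1 from ha, one_mul]

lemma bellman_le_add_dist (hγ : 0 ≤ γ) (W W' : S × Finset ι → ℝ) (u : S × Finset ι) :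
    M.bellman q T γ W u ≤ M.bellman q T γ W' u + γ * dist W W' :=
  sup'_le _ _ fun a ha =>
    (M.qValue_le_add_dist q T hγ W W' (by simpa [enabledActions] using ha)).trans
      (add_le_add_left (le_sup' _ ha) _)

lemma bellman_contracting (hγ0 : 0 ≤ γ) (hγ1 : γ < 1) :
    ContractingWith γ.toNNReal (M.bellman q T γ) := by
  refine ⟨by rwa [Real.toNNReal_lt_one], LipschitzWith.of_dist_le_mul fun W W' => ?_⟩
  rw [Real.coe_toNNReal γ hγ0, dist_pi_le_iff (by positivity)]
  intro u
  rw [Real.dist_eq, abs_sub_le_iff]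
  constructor
  · linarith [M.bellman_le_add_dist q T hγ0 W W' u]
  · have := M.bellman_le_add_dist q T hγ0 W' W u
    rw [dist_comm] at this
    linarith

lemma exists_qValue_eq_bellman (W : S × Finset ι → ℝ) :
    ∃ f : M.ProductPolicy ι, ∀ u, M.qValue q T γ W u (f u) = M.bellman q T γ W u := by
  have h u := exists_mem_eq_sup' (M.enabledActions_nonempty u.1) (M.qValue q T γ W u)
  choose f hf heq using h
  exact ⟨fun u => ⟨f u, by simpa [enabledActions] using hf u⟩, fun u => (heq u).symm⟩

lemma qValue_memory {q : ι → ℝ} {T : ι → Set S} {γ : ℝ} (W : S × Finset ι → ℝ)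
    (π : Hist S A) (a : A) :
    M.qValue q T γ W (π.memory T) a = ∑ s', M.P π.last a s' *
      ((π.snoc a s').payoff q T - π.payoff q T + γ * W ((π.snoc a s').memory T)) := by
  simp [qValue, Hist.memory, Hist.payoff, Hist.visited_snoc]

end MDP

namespace Scheduler

variable (σ : Scheduler M) (q : ι → ℝ) (T : ι → Set S) (γ : ℝ)

/-- The expected discounted payoff gained during the next `t` steps. -/
noncomputable def discValue (t : ℕ) : Hist S A → ℝ :=
  (∑ n ∈ range t, (γ • σ.next) ^ n) (σ.next (Hist.payoff q T) - Hist.payoff q T)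

lemma discValue_zero : σ.discValue q T γ 0 = 0 := by simp [discValue]

lemma discValue_succ (t : ℕ) (π : Hist S A) :
    σ.discValue q T γ (t + 1) π =
      σ.next (fun e => e.payoff q T - π.payoff q T + γ * σ.discValue q T γ t e) π := by
  have h : (fun e => e.payoff q T - π.payoff q T + γ * σ.discValue q T γ t e) =
      Hist.payoff q T + γ • σ.discValue q T γ t - fun _ => π.payoff q T := by
    ext e; simp only [Pi.add_apply, Pi.sub_apply, Pi.smul_apply, smul_eq_mul]; ring
  rw [h, map_sub, map_add, map_smul, next_const, discValue, geom_sum_succ]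
  simp only [LinearMap.add_apply, Module.End.mul_apply, Module.End.one_apply,
    LinearMap.smul_apply, Pi.add_apply, Pi.sub_apply, Pi.smul_apply, smul_eq_mul]
  rw [discValue]
  ring

lemma discValue_apply (t : ℕ) (π : Hist S A) :
    σ.discValue q T γ t π =
      ∑ n ∈ range t, (σ.next ^ n) (σ.next (Hist.payoff q T) - Hist.payoff q T) π * γ ^ n := by
  simp only [discValue, smul_pow, LinearMap.sum_apply, Finset.sum_apply, LinearMap.smul_apply,
    Pi.smul_apply, smul_eq_mul, mul_comm]

variable {q T γ}

lemma discValue_le {W : S × Finset ι → ℝ} {C : ℝ} (hγ : 0 ≤ γ) (hC : ∀ u, |W u| ≤ C)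
    (hσ : ∀ π, σ.next (fun e => e.payoff q T - π.payoff q T + γ * W (e.memory T)) π
      ≤ W (π.memory T)) (t : ℕ) (π : Hist S A) :
    σ.discValue q T γ t π ≤ W (π.memory T) + γ ^ t * C := by
  induction t generalizing π with
  | zero => simp [discValue_zero, neg_le_iff_add_nonneg.mp (abs_le.1 (hC (π.memory T))).1]
  | succ t ih =>
    calc σ.discValue q T γ (t + 1) π
        ≤ σ.next (fun e => (e.payoff q T - π.payoff q T + γ * W (e.memory T))
            + γ ^ (t + 1) * C) π := by
          rw [discValue_succ]
          refine σ.next_mono (fun e => ?_) π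
          linear_combination γ * ih e
      _ ≤ W (π.memory T) + γ ^ (t + 1) * C := by
          rw [next_add_const]; linarith [hσ π]

lemma le_discValue {W : S × Finset ι → ℝ} {C : ℝ} (hγ : 0 ≤ γ) (hC : ∀ u, |W u| ≤ C)
    (hσ : ∀ π, W (π.memory T) ≤
      σ.next (fun e => e.payoff q T - π.payoff q T + γ * W (e.memory T)) π)
    (t : ℕ) (π : Hist S A) :
    W (π.memory T) - γ ^ t * C ≤ σ.discValue q T γ t π := by
  induction t generalizing π with
  | zero => simp [discValue_zero, (abs_le.1 (hC (π.memory T))).2]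
  | succ t ih =>
    calc W (π.memory T) - γ ^ (t + 1) * C
        ≤ σ.next (fun e => (e.payoff q T - π.payoff q T + γ * W (e.memory T))
            + -(γ ^ (t + 1) * C)) π := by
          rw [next_add_const]; linarith [hσ π]
      _ ≤ σ.discValue q T γ (t + 1) π := by
          rw [discValue_succ]
          refine σ.next_mono (fun e => ?_) π
          linear_combination γ * ih e

lemma next_le_bellman (W : S × Finset ι → ℝ) (π : Hist S A) :
    σ.next (fun e => e.payoff q T - π.payoff q T + γ * W (e.memory T)) π
      ≤ M.bellman q T γ W (π.memory T) :=
  σ.sum_choice_mul_le π fun a ha => by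
    rw [← M.qValue_memory]
    exact le_sup' _ (mem_filter.2 ⟨mem_univ a, ha⟩)

noncomputable def ofPolicy (T : ι → Set S) (f : M.ProductPolicy ι) : Scheduler M :=
  ofDet fun π => f (π.memory T)

lemma next_ofPolicy (f : M.ProductPolicy ι) (W : S × Finset ι → ℝ) (π : Hist S A) :
    (ofPolicy T f).next (fun e => e.payoff q T - π.payoff q T + γ * W (e.memory T)) π
      = M.qValue q T γ W (π.memory T) (f (π.memory T)) := by
  rw [M.qValue_memory]
  exact next_ofDet (fun π => f (π.memory T)) _ π

variable (q T) in
noncomputable def payoffGain (s : S) (n : ℕ) : ℝ :=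
  (σ.next ^ n) (σ.next (Hist.payoff q T) - Hist.payoff q T) (s, [])

lemma payoffGain_eq_sub (s : S) (n : ℕ) : σ.payoffGain q T s n =
    (σ.next ^ (n + 1)) (Hist.payoff q T) (s, []) - (σ.next ^ n) (Hist.payoff q T) (s, []) := by
  rw [payoffGain, map_sub, pow_succ, Module.End.mul_apply, Pi.sub_apply]

lemma abs_payoffGain_le (s : S) (n : ℕ) : |σ.payoffGain q T s n| ≤ 2 * ∑ i, |q i| := by
  rw [payoffGain_eq_sub, two_mul]
  exact (abs_sub _ _).trans (add_le_add
    (σ.abs_pow_next_apply_le (Hist.abs_payoff_le q T) _ _)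
    (σ.abs_pow_next_apply_le (Hist.abs_payoff_le q T) _ _))

lemma tendsto_discValue_nil (hγ0 : 0 ≤ γ) (hγ1 : γ < 1) (s : S) :
    Tendsto (fun t => σ.discValue q T γ t (s, [])) atTop
      (𝓝 (∑' n, σ.payoffGain q T s n * γ ^ n)) := by
  have hsum : Summable fun n => σ.payoffGain q T s n * γ ^ n := by
    refine .of_norm_bounded ((summable_geometric_of_lt_one hγ0 hγ1).mul_left (2 * ∑ i, |q i|))
      fun n => ?_
    rw [norm_mul, norm_pow, Real.norm_eq_abs, Real.norm_eq_abs, abs_of_nonneg hγ0]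
    exact mul_le_mul_of_nonneg_right (σ.abs_payoffGain_le s n) (by positivity)
  simpa only [discValue_apply, payoffGain] using hsum.hasSum.tendsto_sum_nat

lemma tendsto_tsum_payoffGain_mul_pow (s : S) :
    Tendsto (fun γ => ∑' n, σ.payoffGain q T s n * γ ^ n) (𝓝[<] 1)
      (𝓝 (∑ i, q i * Pr M σ s (T i) - Hist.payoff q T ((s, []) : Hist S A))) := by
  refine Real.tendsto_tsum_powerSeries_nhdsWithin_lt ?_
  simp only [payoffGain_eq_sub,
    sum_range_sub fun n => (σ.next ^ n) (Hist.payoff q T) ((s, []) : Hist S A)]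
  exact (σ.tendsto_pow_next_payoff q T s).sub_const _

end Scheduler

variable {q : ι → ℝ} {T : ι → Set S} {γ : ℝ} in
theorem exists_policy_forall_tsum_payoffGain_le (hγ0 : 0 ≤ γ) (hγ1 : γ < 1) (s : S) :
    ∃ f : M.ProductPolicy ι, ∀ σ : Scheduler M,
      ∑' n, σ.payoffGain q T s n * γ ^ n
        ≤ ∑' n, (Scheduler.ofPolicy T f).payoffGain q T s n * γ ^ n := by
  set W := ContractingWith.fixedPoint _ (M.bellman_contracting q T hγ0 hγ1)
  have hW : M.bellman q T γ W = W := ContractingWith.fixedPoint_isFixedPt _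
  obtain ⟨f, hf⟩ := M.exists_qValue_eq_bellman q T W (γ := γ)
  have hC u : |W u| ≤ ‖W‖ := by rw [← Real.norm_eq_abs]; exact norm_le_pi_norm W u
  have hγt : Tendsto (fun t => γ ^ t * ‖W‖) atTop (𝓝 0) := by
    simpa using (tendsto_pow_atTop_nhds_zero_of_lt_one hγ0 hγ1).mul_const ‖W‖
  refine ⟨f, fun σ => ?_⟩
  have hupper := le_of_tendsto_of_tendsto' (σ.tendsto_discValue_nil hγ0 hγ1 s)
    (by simpa using tendsto_const_nhds.add hγt)
    fun t => σ.discValue_le hγ0 hC (fun π => hW ▸ σ.next_le_bellman W π) t (s, [])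
  have hlower := le_of_tendsto_of_tendsto' (by simpa using tendsto_const_nhds.sub hγt)
    ((Scheduler.ofPolicy T f).tendsto_discValue_nil hγ0 hγ1 s)
    fun t => (Scheduler.ofPolicy T f).le_discValue hγ0 hC
      (fun π => by rw [Scheduler.next_ofPolicy, hf, hW]) t (s, [])
  exact hupper.trans hlower

theorem exists_forall_sum_mul_pr_le (q : ι → ℝ) (T : ι → Set S) (s : S) :
    ∃ σ₀ : Scheduler M, ∀ σ : Scheduler M,
      ∑ i, q i * Pr M σ s (T i) ≤ ∑ i, q i * Pr M σ₀ s (T i) := by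
  have hγ : ∀ᶠ γ in 𝓝[<] (1 : ℝ), 0 ≤ γ ∧ γ < 1 :=
    (eventually_nhdsWithin_of_eventually_nhds (lt_mem_nhds one_pos)).mono (fun _ h => h.le)
      |>.and self_mem_nhdsWithin
  have hdisc : ∀ᶠ γ in 𝓝[<] (1 : ℝ), ∃ f : M.ProductPolicy ι,
      ∀ σ : Scheduler M, ∑' n, σ.payoffGain q T s n * γ ^ n
        ≤ ∑' n, (Scheduler.ofPolicy T f).payoffGain q T s n * γ ^ n :=
    hγ.mono fun _ h => exists_policy_forall_tsum_payoffGain_le h.1 h.2 s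
  -- there are finitely many policies, so one is optimal for `γ` arbitrarily close to `1`
  obtain ⟨f₀, hf₀⟩ := frequently_exists.1 hdisc.frequently
  refine ⟨Scheduler.ofPolicy T f₀, fun σ => ?_⟩
  have key := isClosed_le continuous_fst continuous_snd |>.mem_of_frequently_of_tendsto
    (hf₀.mono fun γ hγ => hγ σ)
    ((σ.tendsto_tsum_payoffGain_mul_pow s).prodMk_nhds
      ((Scheduler.ofPolicy T f₀).tendsto_tsum_payoffGain_mul_pow s))
  simpa using key

end ProductMDP

section Relational

variable {S A : Type*} [Fintype S] [Fintype A] {m n : ℕ} (M : MDP S A) (q : Fin m → ℚ)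
  (s : Fin m → S) (k : Fin m → Fin n) (T : Fin m → Set S)

lemma combVal_eq_sum_subtype (σ : Scheduler M) (c : S × Fin n) :
    combVal M q s k T σ c = ∑ i : {i // (s i, k i) = c}, (q i : ℝ) * Pr M σ c.1 (T i) :=
  sum_subtype _ (by simp) _

lemma exists_forall_combVal_le : ∃ Φ : S × Fin n → Scheduler M,
    ∀ c σ, combVal M q s k T σ c ≤ combVal M q s k T (Φ c) c := by
  choose Φ hΦ using fun c : S × Fin n => exists_forall_sum_mul_pr_le (M := M)
    (fun i : {i // (s i, k i) = c} => (q i : ℝ)) (fun i => T i) c.1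
  exact ⟨Φ, fun c σ => by simpa only [combVal_eq_sum_subtype] using hΦ c σ⟩

lemma sum_mul_pr_eq_sum_combVal (τ : S × Fin n → Scheduler M) :
    ∑ i, (q i : ℝ) * Pr M (τ (s i, k i)) (s i) (T i)
      = ∑ c ∈ combSet s k, combVal M q s k T (τ c) c := by
  rw [← sum_fiberwise_of_maps_to (g := fun i => (s i, k i)) (t := combSet s k)
    fun i _ => mem_image_of_mem _ (mem_univ i)]
  refine sum_congr rfl fun c _ => sum_congr rfl fun i hi => ?_
  obtain rfl := (mem_filter.1 hi).2
  rfl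

lemma isGreatest_achSet_vMax : IsGreatest (achSet M q s k T) (vMax M q s k T) := by
  obtain ⟨Φ, hΦ⟩ := exists_forall_combVal_le M q s k T
  have hvMax : vMax M q s k T = ∑ c ∈ combSet s k, combVal M q s k T (Φ c) c :=
    sum_congr rfl fun c _ => IsGreatest.csSup_eq ⟨⟨Φ c, rfl⟩, by rintro _ ⟨σ, rfl⟩; exact hΦ c σ⟩
  refine ⟨⟨fun j => Scheduler.glue fun x => Φ (x, j), ?_⟩, ?_⟩
  · rw [hvMax, ← sum_mul_pr_eq_sum_combVal]
    simp [Scheduler.pr_glue]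
  · rintro _ ⟨σ, rfl⟩
    rw [hvMax]
    exact (sum_mul_pr_eq_sum_combVal M q s k T fun c => σ c.2).trans_le
      (sum_le_sum fun c _ => hΦ c _)

end Relational

theorem inequality_iff_vmax_general
    {S A : Type*} [Fintype S] [Fintype A]
    (M : MDP S A) {m n : ℕ}
    (q : Fin m → ℚ) (s : Fin m → S) (k : Fin m → Fin n)
    (T : Fin m → Set S) (q₀ : ℚ) :
    ((∃ σ : Fin n → Scheduler M,
        (∑ i, (q i : ℝ) * Pr M (σ (k i)) (s i) (T i)) ≥ (q₀ : ℝ)) ↔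
      vMax M q s k T ≥ (q₀ : ℝ)) ∧
    ((∃ σ : Fin n → Scheduler M,
        (∑ i, (q i : ℝ) * Pr M (σ (k i)) (s i) (T i)) > (q₀ : ℝ)) ↔
      vMax M q s k T > (q₀ : ℝ)) := by
  obtain ⟨⟨σ₀, hσ₀⟩, hmax⟩ := isGreatest_achSet_vMax M q s k T
  exact ⟨⟨fun ⟨σ, hσ⟩ => hσ.trans (hmax ⟨σ, rfl⟩), fun h => ⟨σ₀, hσ₀ ▸ h⟩⟩,
    ⟨fun ⟨σ, hσ⟩ => hσ.trans_le (hmax ⟨σ, rfl⟩), fun h => ⟨σ₀, hσ₀ ▸ h⟩⟩⟩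

/-- For every rational `q₀`: (i) some schedulers achieve a weighted sum
`≥ q₀` iff `v^max ≥ q₀`, and (ii) some schedulers achieve a weighted sum `> q₀` iff
`v^max > q₀`. -/
theorem inequality_iff_vmax
    {S A : Type*} [Fintype S] [Fintype A] [Nonempty S] [Nonempty A]
    (M : MDP S A) {m n : ℕ} (hn : 1 ≤ n) (hmn : n ≤ m)
    (q : Fin m → ℚ) (s : Fin m → S) (k : Fin m → Fin n)
    (hk : Function.Surjective k) (T : Fin m → Set S) (q₀ : ℚ) :
    ((∃ σ : Fin n → Scheduler M,
        (∑ i, (q i : ℝ) * Pr M (σ (k i)) (s i) (T i)) ≥ (q₀ : ℝ)) ↔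
      vMax M q s k T ≥ (q₀ : ℝ)) ∧
    ((∃ σ : Fin n → Scheduler M,
        (∑ i, (q i : ℝ) * Pr M (σ (k i)) (s i) (T i)) > (q₀ : ℝ)) ↔
      vMax M q s k T > (q₀ : ℝ)) :=
  inequality_iff_vmax_general M q s k T q₀
end
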